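/- arXiv:1710.04643 — 2 statements merged into one kernel-verified Lean document; each statement's English description precedes it below -/
import Mathlib

section
/- Under the Markov assumption that X_S − X_0 − X_T for all disjoint S,T ⊆ L, the value function v(S) = I(X_S; X_0 | X_{L\S}) is superadditive: for all disjoint S,T ⊆ L, v(S) + v(T) ≤ v(S ∪ T). -/
noncomputable section
open Finset
open scoped Classical BigOperators

/-- Probability of an event under a pmf on a finite sample space. -/
def Pr {Ω : Type} [Fintype Ω] (p : Ω → ℝ) (E : Ω → Prop) : ℝ :=
  ∑ ω : Ω, if E ω then p ω else 0

/-- `p` is a probability mass function. -/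
def IsPMF {Ω : Type} [Fintype Ω] (p : Ω → ℝ) : Prop :=
  (∀ ω, 0 ≤ p ω) ∧ (∑ ω : Ω, p ω) = 1

/-- Shannon entropy of a finitely-valued random variable `X` under pmf `p`. -/
def ent {Ω α : Type} [Fintype Ω] [Fintype α] (p : Ω → ℝ) (X : Ω → α) : ℝ :=
  -∑ a : α, Pr p (fun ω => X ω = a) * Real.log (Pr p (fun ω => X ω = a))

/-- Conditional Shannon entropy `H(X|Y)`. -/
def condEnt {Ω α β : Type} [Fintype Ω] [Fintype α] [Fintype β]
    (p : Ω → ℝ) (X : Ω → α) (Y : Ω → β) : ℝ :=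
  ent p (fun ω => (X ω, Y ω)) - ent p Y

/-- Mutual information `I(X;Y)`. -/
def mi {Ω α β : Type} [Fintype Ω] [Fintype α] [Fintype β]
    (p : Ω → ℝ) (X : Ω → α) (Y : Ω → β) : ℝ :=
  ent p X + ent p Y - ent p (fun ω => (X ω, Y ω))

/-- Conditional mutual information `I(X;Y|Z)`. -/
def cmi {Ω α β γ : Type} [Fintype Ω] [Fintype α] [Fintype β] [Fintype γ]
    (p : Ω → ℝ) (X : Ω → α) (Y : Ω → β) (Z : Ω → γ) : ℝ :=
  ent p (fun ω => (X ω, Z ω)) + ent p (fun ω => (Y ω, Z ω))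
    - ent p (fun ω => (X ω, Y ω, Z ω)) - ent p Z

/-- `X` and `Y` are conditionally independent given `Z` (Markov chain `X - Z - Y`). -/
def CondIndep {Ω α β γ : Type} [Fintype Ω] [Fintype α] [Fintype β] [Fintype γ]
    (p : Ω → ℝ) (X : Ω → α) (Y : Ω → β) (Z : Ω → γ) : Prop :=
  ∀ (a : α) (b : β) (c : γ),
    Pr p (fun ω => X ω = a ∧ Y ω = b ∧ Z ω = c) * Pr p (fun ω => Z ω = c)
      = Pr p (fun ω => X ω = a ∧ Z ω = c) * Pr p (fun ω => Y ω = b ∧ Z ω = c)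

/-- The tuple random variable `X_S = (X_l)_{l ∈ S}`. -/
def XS {Ω L 𝒳 : Type} [Fintype Ω] (X : L → Ω → 𝒳) (S : Finset L) :
    Ω → (S → 𝒳) :=
  fun ω i => X i ω

/-- The value function of the secret-key generation game:
`v(S) = I(X_S; X_0 | X_{L\S})`. -/
def vGame {Ω L 𝒳 β : Type} [Fintype Ω] [Fintype L] [DecidableEq L] [Fintype 𝒳] [Fintype β]
    (p : Ω → ℝ) (X : L → Ω → 𝒳) (X0 : Ω → β) (S : Finset L) : ℝ :=
  cmi p (XS X S) X0 (XS X Sᶜ)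

/-!
Write `A = X_S`, `B = X_T`, `C = X_{(S ∪ T)ᶜ}` and `Y = X_0`. The chain rule gives
`v(S ∪ T) = I(A, B; Y | C) = I(B; Y | C) + I(A; Y | B, C) = I(B; Y | C) + v(S)`, so it suffices
that `v(T) = I(B; Y | A, C) ≤ I(B; Y | C)`. Expanding `I(B; Y, A | C)` by the chain rule in both
orders gives `I(B; Y | A, C) = I(B; Y | C) + I(B; A | Y, C) - I(B; A | C)`, and
`I(B; A | Y, C) ≤ I(B; A, C | Y) = 0` by the Markov chain `B - Y - (A, C)`.
Nonnegativity of conditional mutual information is Gibbs' inequality, from `log t ≥ 1 - 1/t`.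
-/

open Real

lemma sub_mul_div_le_mul_log {a b c d : ℝ} (ha : 0 ≤ a) (hab : a ≤ b) (hac : a ≤ c)
    (had : a ≤ d) : a - c * d / b ≤ a * (log a + log b - log c - log d) := by
  rcases ha.eq_or_lt with rfl | ha
  · simpa using div_nonneg (mul_nonneg hac had) hab
  have hb := ha.trans_le hab
  have hc := ha.trans_le hac
  have hd := ha.trans_le had
  calc a - c * d / b = a * (1 - (a * b / (c * d))⁻¹) := by field_simp
    _ ≤ a * log (a * b / (c * d)) := by
        gcongr
        exact one_sub_inv_le_log_of_pos (by positivity)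
    _ = a * (log a + log b - log c - log d) := by
        rw [log_div (by positivity) (by positivity), log_mul ha.ne' hb.ne', log_mul hc.ne' hd.ne']
        ring

section Probability

variable {Ω α β γ δ δ' : Type} [Fintype Ω] [Fintype α] [Fintype β] [Fintype γ] {p : Ω → ℝ}

lemma Pr_congr {E F : Ω → Prop} (h : ∀ ω, E ω ↔ F ω) : Pr p E = Pr p F :=
  congrArg (Pr p) (funext fun ω => propext (h ω))

lemma Pr_nonneg (hp : ∀ ω, 0 ≤ p ω) (E : Ω → Prop) : 0 ≤ Pr p E :=
  Finset.sum_nonneg fun ω _ => ite_nonneg (hp ω) le_rfl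

lemma Pr_mono (hp : ∀ ω, 0 ≤ p ω) {E F : Ω → Prop} (h : ∀ ω, E ω → F ω) :
    Pr p E ≤ Pr p F :=
  Finset.sum_le_sum fun ω _ => by
    by_cases hE : E ω
    · simp [hE, h ω hE]
    · simp only [hE, if_false]
      exact ite_nonneg (hp ω) le_rfl

lemma sum_Pr_eq_and (X : Ω → α) (E : Ω → Prop) :
    ∑ a, Pr p (fun ω => X ω = a ∧ E ω) = Pr p E := by
  unfold Pr
  rw [Finset.sum_comm]
  refine Finset.sum_congr rfl fun ω _ => ?_
  by_cases hE : E ω <;> simp [hE]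

lemma sum_mul_comp_eq_sum_Pr_mul [Fintype δ] (p : Ω → ℝ) (f : δ → ℝ) (W : Ω → δ) :
    ∑ ω, p ω * f (W ω) = ∑ d, Pr p (fun ω => W ω = d) * f d := by
  simp only [Pr, Finset.sum_mul, ite_mul, zero_mul]
  rw [Finset.sum_comm]
  simp

def atomProb (p : Ω → ℝ) (W : Ω → δ) (ω : Ω) : ℝ :=
  Pr p fun ω' => W ω' = W ω

lemma atomProb_congr {W : Ω → δ} {W' : Ω → δ'} (h : ∀ ω ω', W ω' = W ω ↔ W' ω' = W' ω) :
    atomProb p W = atomProb p W' :=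
  funext fun ω => Pr_congr (h ω)

lemma ent_eq_neg_sum_mul_log_atomProb [Fintype δ] (p : Ω → ℝ) (W : Ω → δ) :
    ent p W = -∑ ω, p ω * log (atomProb p W ω) :=
  congrArg Neg.neg (sum_mul_comp_eq_sum_Pr_mul p (fun d => log (Pr p fun ω => W ω = d)) W).symm

lemma cmi_eq_sum_mul_log_atomProb (p : Ω → ℝ) (X : Ω → α) (Y : Ω → β) (Z : Ω → γ) :
    cmi p X Y Z = ∑ ω, p ω *
      (log (atomProb p (fun ω => (X ω, Y ω, Z ω)) ω) + log (atomProb p Z ω)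
        - log (atomProb p (fun ω => (X ω, Z ω)) ω) - log (atomProb p (fun ω => (Y ω, Z ω)) ω)) := by
  simp only [cmi, ent_eq_neg_sum_mul_log_atomProb, mul_add, mul_sub, Finset.sum_add_distrib,
    Finset.sum_sub_distrib]
  ring

lemma cmi_eq_sum_Pr_mul_log (p : Ω → ℝ) (X : Ω → α) (Y : Ω → β) (Z : Ω → γ) :
    cmi p X Y Z = ∑ z, ∑ x, ∑ y, Pr p (fun ω => X ω = x ∧ Y ω = y ∧ Z ω = z) *
      (log (Pr p fun ω => X ω = x ∧ Y ω = y ∧ Z ω = z) + log (Pr p fun ω => Z ω = z)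
        - log (Pr p fun ω => X ω = x ∧ Z ω = z) - log (Pr p fun ω => Y ω = y ∧ Z ω = z)) := by
  rw [cmi_eq_sum_mul_log_atomProb]
  simp only [atomProb, Prod.mk.injEq]
  refine (sum_mul_comp_eq_sum_Pr_mul p (fun v : γ × α × β =>
    log (Pr p fun ω => X ω = v.2.1 ∧ Y ω = v.2.2 ∧ Z ω = v.1) + log (Pr p fun ω => Z ω = v.1)
      - log (Pr p fun ω => X ω = v.2.1 ∧ Z ω = v.1)
      - log (Pr p fun ω => Y ω = v.2.2 ∧ Z ω = v.1)) fun ω => (Z ω, X ω, Y ω)).trans ?_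
  simp only [Fintype.sum_prod_type, Prod.mk.injEq]
  refine Finset.sum_congr rfl fun z _ => Finset.sum_congr rfl fun x _ =>
    Finset.sum_congr rfl fun y _ => ?_
  rw [Pr_congr fun ω => (and_rotate : Z ω = z ∧ X ω = x ∧ Y ω = y ↔ _)]

lemma sum_sum_Pr_sub_mul_div_eq_zero (X : Ω → α) (Y : Ω → β) (E : Ω → Prop) :
    ∑ x, ∑ y, (Pr p (fun ω => X ω = x ∧ Y ω = y ∧ E ω)
      - (Pr p fun ω => X ω = x ∧ E ω) * (Pr p fun ω => Y ω = y ∧ E ω) / Pr p E) = 0 := by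
  have marg_Y : ∀ x, ∑ y, Pr p (fun ω => X ω = x ∧ Y ω = y ∧ E ω)
      = Pr p (fun ω => X ω = x ∧ E ω) := fun x => by
    rw [← sum_Pr_eq_and Y]
    exact Finset.sum_congr rfl fun y _ => Pr_congr fun ω => and_left_comm
  simp only [Finset.sum_sub_distrib, marg_Y, sum_Pr_eq_and, ← Finset.sum_div, ← Finset.mul_sum,
    ← Finset.sum_mul, mul_self_div_self, sub_self]

lemma cmi_nonneg (hp : ∀ ω, 0 ≤ p ω) (X : Ω → α) (Y : Ω → β) (Z : Ω → γ) :
    0 ≤ cmi p X Y Z := by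
  rw [cmi_eq_sum_Pr_mul_log]
  refine (Finset.sum_eq_zero (s := Finset.univ) fun z _ =>
    sum_sum_Pr_sub_mul_div_eq_zero (p := p) X Y fun ω => Z ω = z).symm.trans_le ?_
  exact Finset.sum_le_sum fun z _ => Finset.sum_le_sum fun x _ => Finset.sum_le_sum fun y _ =>
    sub_mul_div_le_mul_log (Pr_nonneg hp _) (Pr_mono hp fun _ h => h.2.2)
      (Pr_mono hp fun _ h => ⟨h.1, h.2.2⟩) (Pr_mono hp fun _ h => h.2)

lemma cmi_eq_zero_of_condIndep (hp : ∀ ω, 0 ≤ p ω) {X : Ω → α} {Y : Ω → β} {Z : Ω → γ}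
    (h : CondIndep p X Y Z) : cmi p X Y Z = 0 := by
  rw [cmi_eq_sum_Pr_mul_log]
  refine Finset.sum_eq_zero fun z _ => Finset.sum_eq_zero fun x _ => Finset.sum_eq_zero fun y _ => ?_
  rcases (Pr_nonneg hp fun ω => X ω = x ∧ Y ω = y ∧ Z ω = z).eq_or_lt with h0 | hxyz
  · rw [← h0, zero_mul]
  have hz : 0 < Pr p fun ω => Z ω = z := hxyz.trans_le (Pr_mono hp fun _ h => h.2.2)
  have hxz : 0 < Pr p fun ω => X ω = x ∧ Z ω = z :=
    hxyz.trans_le (Pr_mono hp fun _ h => ⟨h.1, h.2.2⟩)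
  have hyz : 0 < Pr p fun ω => Y ω = y ∧ Z ω = z := hxyz.trans_le (Pr_mono hp fun _ h => h.2)
  have hlog := congrArg log (h x y z)
  rw [log_mul hxyz.ne' hz.ne', log_mul hxz.ne' hyz.ne'] at hlog
  rw [hlog]
  ring

lemma cmi_congr {α' β' γ' : Type} [Fintype α'] [Fintype β'] [Fintype γ']
    {X : Ω → α} {Y : Ω → β} {Z : Ω → γ} {X' : Ω → α'} {Y' : Ω → β'} {Z' : Ω → γ'}
    (hX : ∀ ω ω', X ω' = X ω ↔ X' ω' = X' ω) (hY : ∀ ω ω', Y ω' = Y ω ↔ Y' ω' = Y' ω)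
    (hZ : ∀ ω ω', Z ω' = Z ω ↔ Z' ω' = Z' ω) :
    cmi p X Y Z = cmi p X' Y' Z' := by
  simp only [cmi_eq_sum_mul_log_atomProb]
  rw [atomProb_congr (W := fun ω => (X ω, Y ω, Z ω)) (W' := fun ω => (X' ω, Y' ω, Z' ω))
      fun _ _ => by simp only [Prod.mk.injEq, hX, hY, hZ],
    atomProb_congr (W := fun ω => (X ω, Z ω)) (W' := fun ω => (X' ω, Z' ω))
      fun _ _ => by simp only [Prod.mk.injEq, hX, hZ],
    atomProb_congr (W := fun ω => (Y ω, Z ω)) (W' := fun ω => (Y' ω, Z' ω))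
      fun _ _ => by simp only [Prod.mk.injEq, hY, hZ],
    atomProb_congr hZ]

lemma cmi_comm (p : Ω → ℝ) (X : Ω → α) (Y : Ω → β) (Z : Ω → γ) :
    cmi p X Y Z = cmi p Y X Z := by
  simp only [cmi_eq_sum_mul_log_atomProb]
  rw [atomProb_congr (W' := fun ω => (Y ω, X ω, Z ω))
    fun _ _ => by simp only [Prod.mk.injEq]; exact and_left_comm]
  exact Finset.sum_congr rfl fun ω _ => by ring

lemma cmi_prod_eq_add [Fintype δ] (p : Ω → ℝ) (X : Ω → α) (Y : Ω → β) (W : Ω → δ) (Z : Ω → γ) :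
    cmi p X (fun ω => (Y ω, W ω)) Z = cmi p X W Z + cmi p X Y (fun ω => (W ω, Z ω)) := by
  simp only [cmi_eq_sum_mul_log_atomProb, ← Finset.sum_add_distrib]
  rw [atomProb_congr (W := fun ω => (X ω, (Y ω, W ω), Z ω)) (W' := fun ω => (X ω, Y ω, W ω, Z ω))
      fun _ _ => by simp only [Prod.mk.injEq, and_assoc],
    atomProb_congr (W := fun ω => ((Y ω, W ω), Z ω)) (W' := fun ω => (Y ω, W ω, Z ω))
      fun _ _ => by simp only [Prod.mk.injEq, and_assoc]]
  exact Finset.sum_congr rfl fun ω _ => by ring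

end Probability

section Superadditivity

variable {Ω α β γ δ : Type} [Fintype Ω] [Fintype α] [Fintype β] [Fintype γ] [Fintype δ]
  {p : Ω → ℝ}

lemma cmi_add_cmi_le_cmi_prod (hp : ∀ ω, 0 ≤ p ω) (A : Ω → α) (B : Ω → β) (C : Ω → γ)
    (Y : Ω → δ) (hMarkov : cmi p B (fun ω => (A ω, C ω)) Y = 0) :
    cmi p A Y (fun ω => (B ω, C ω)) + cmi p B Y (fun ω => (A ω, C ω))
      ≤ cmi p (fun ω => (A ω, B ω)) Y C := by
  have chain_AB : cmi p (fun ω => (A ω, B ω)) Y C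
      = cmi p Y B C + cmi p A Y (fun ω => (B ω, C ω)) := by
    rw [cmi_comm, cmi_prod_eq_add, cmi_comm p Y A]
  have chain_YA := cmi_prod_eq_add p B Y A C
  have chain_AY := cmi_prod_eq_add p B A Y C
  have chain_AC := cmi_prod_eq_add p B A C Y
  have swap_AY : cmi p B (fun ω => (Y ω, A ω)) C = cmi p B (fun ω => (A ω, Y ω)) C :=
    cmi_congr (fun _ _ => Iff.rfl) (fun _ _ => by simp only [Prod.mk.injEq, and_comm])
      (fun _ _ => Iff.rfl)
  have swap_YC : cmi p B A (fun ω => (Y ω, C ω)) = cmi p B A (fun ω => (C ω, Y ω)) :=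
    cmi_congr (fun _ _ => Iff.rfl) (fun _ _ => Iff.rfl)
      (fun _ _ => by simp only [Prod.mk.injEq, and_comm])
  have := cmi_nonneg hp B A C
  have := cmi_nonneg hp B C Y
  have := cmi_comm p Y B C
  linarith

end Superadditivity

lemma compl_eq_sup_compl_sup {α : Type} [BooleanAlgebra α] {a b : α} (h : Disjoint a b) :
    aᶜ = b ⊔ (a ⊔ b)ᶜ := by
  rw [compl_sup, sup_inf_left, sup_compl_eq_top, inf_top_eq]
  exact (sup_eq_right.mpr h.symm.le_compl_right).symm

section TupleVariables

variable {Ω L 𝒳 : Type} [Fintype Ω] (X : L → Ω → 𝒳)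

lemma XS_eq_XS_iff (S : Finset L) (ω ω' : Ω) :
    XS X S ω' = XS X S ω ↔ ∀ i ∈ S, X i ω' = X i ω := by
  simp [XS, funext_iff]

lemma XS_eq_XS_iff_of_eq_union [DecidableEq L] {P Q R : Finset L} (h : P = Q ∪ R) (ω ω' : Ω) :
    XS X P ω' = XS X P ω ↔ (XS X Q ω', XS X R ω') = (XS X Q ω, XS X R ω) := by
  simp only [XS_eq_XS_iff, Prod.mk.injEq, h, Finset.mem_union, or_imp, forall_and]

end TupleVariables

/-- the value function `v(S) = I(X_S; X_0 | X_{L\S})` is superadditive. -/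
theorem statement1 {Ω L 𝒳 β : Type} [Fintype Ω] [Fintype L] [DecidableEq L] [Fintype 𝒳] [Fintype β]
    (p : Ω → ℝ) (hp : IsPMF p) (X : L → Ω → 𝒳) (X0 : Ω → β)
    (hM : ∀ S T : Finset L, Disjoint S T → CondIndep p (XS X S) (XS X T) X0) :
    ∀ S T : Finset L, Disjoint S T →
      vGame p X X0 S + vGame p X X0 T ≤ vGame p X X0 (S ∪ T) := by
  intro S T hST
  set C := XS X (S ∪ T)ᶜ
  have hSc : Sᶜ = T ∪ (S ∪ T)ᶜ := compl_eq_sup_compl_sup hST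
  have hTc : Tᶜ = S ∪ (S ∪ T)ᶜ := by
    rw [Finset.union_comm S T]
    exact compl_eq_sup_compl_sup hST.symm
  have hT_Markov : cmi p (XS X T) (fun ω => (XS X S ω, C ω)) X0 = 0 := by
    rw [← cmi_congr (X := XS X T) (Y := XS X Tᶜ) (Z := X0) (fun _ _ => Iff.rfl)
      (XS_eq_XS_iff_of_eq_union X hTc) (fun _ _ => Iff.rfl)]
    exact cmi_eq_zero_of_condIndep hp.1 (hM T Tᶜ disjoint_compl_right)
  have hS : vGame p X X0 S = cmi p (XS X S) X0 (fun ω => (XS X T ω, C ω)) :=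
    cmi_congr (fun _ _ => Iff.rfl) (fun _ _ => Iff.rfl) (XS_eq_XS_iff_of_eq_union X hSc)
  have hT : vGame p X X0 T = cmi p (XS X T) X0 (fun ω => (XS X S ω, C ω)) :=
    cmi_congr (fun _ _ => Iff.rfl) (fun _ _ => Iff.rfl) (XS_eq_XS_iff_of_eq_union X hTc)
  have hST' : vGame p X X0 (S ∪ T) = cmi p (fun ω => (XS X S ω, XS X T ω)) X0 C :=
    cmi_congr (XS_eq_XS_iff_of_eq_union X rfl) (fun _ _ => Iff.rfl) (fun _ _ => Iff.rfl)
  rw [hS, hT, hST']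
  exact cmi_add_cmi_le_cmi_prod hp.1 (XS X S) (XS X T) C X0 hT_Markov
end
end

section
/- Under the Markov assumption that X_S − X_0 − X_T for all disjoint S,T ⊆ L, the value function v(S) = I(X_S; X_0 | X_{L\S}) is supermodular (the game is convex): for all U,V ⊆ L, v(U) + v(V) ≤ v(U∪V) + v(U∩V). -/
noncomputable section
open Finset
open scoped Classical BigOperators

/-!
Up to a constant, `v(S)` is `H(X₀ | X_{L∖S})`, so the claim is that `T ↦ H(X₀ | X_T)` is
supermodular. For `C = A ∩ B` and `E = B ∖ A`, the defect
`H(X₀|X_A) + H(X₀|X_B) - H(X₀|X_{A∪B}) - H(X₀|X_C)` equals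
`I(X_A; X_E | X₀) - I(X_C; X_E | X₀) - I(X_A; X_B | X_C)`: the first term vanishes by the
Markov assumption and the other two are nonnegative. Nonnegativity of `I(A;B|C)` is Gibbs'
inequality, since it is the relative entropy of the law of `(A,B,C)` with respect to
`P(a,c) P(b,c) / P(c)`.
-/
open Real

section Law

variable {Ω α : Type} [Fintype Ω]

def law (p : Ω → ℝ) (W : Ω → α) (a : α) : ℝ :=
  Pr p (fun ω => W ω = a)

theorem law_nonneg {p : Ω → ℝ} (hp : ∀ ω, 0 ≤ p ω) (W : Ω → α) (a : α) : 0 ≤ law p W a :=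
  Finset.sum_nonneg fun ω _ => by split_ifs <;> simp [hp]

theorem law_pos_self {p : Ω → ℝ} (hp : ∀ ω, 0 ≤ p ω) (W : Ω → α) {ω : Ω} (hω : 0 < p ω) :
    0 < law p W (W ω) := by
  refine hω.trans_le ?_
  have := Finset.single_le_sum (f := fun ω' => if W ω' = W ω then p ω' else 0)
    (fun ω' _ => by split_ifs <;> simp [hp]) (mem_univ ω)
  simpa [law, Pr] using this

variable [Fintype α]

theorem sum_mul_comp (p : Ω → ℝ) (W : Ω → α) (φ : α → ℝ) :
    ∑ ω, p ω * φ (W ω) = ∑ a, law p W a * φ a := by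
  simp only [law, Pr, Finset.sum_mul, ite_mul, zero_mul]
  rw [Finset.sum_comm]
  simp [Finset.sum_ite_eq]

theorem sum_law (p : Ω → ℝ) (W : Ω → α) : ∑ a, law p W a = ∑ ω, p ω := by
  simpa using (sum_mul_comp p W fun _ => 1).symm

theorem ent_eq_sum (p : Ω → ℝ) (W : Ω → α) :
    ent p W = -∑ ω, p ω * log (law p W (W ω)) := by
  rw [sum_mul_comp p W fun a => log (law p W a)]
  rfl

theorem ent_congr {α' : Type} [Fintype α'] (p : Ω → ℝ) {W : Ω → α} {W' : Ω → α'}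
    (h : ∀ ω ω', W ω' = W ω ↔ W' ω' = W' ω) : ent p W = ent p W' := by
  simp only [ent_eq_sum, law, h]

theorem ent_prod_comm {β : Type} [Fintype β] (p : Ω → ℝ) (W : Ω → α) (V : Ω → β) :
    ent p (fun ω => (W ω, V ω)) = ent p (fun ω => (V ω, W ω)) :=
  ent_congr p fun ω ω' => by simp only [Prod.mk.injEq, and_comm]

theorem sum_law_prod_left {γ : Type} [Fintype γ] (p : Ω → ℝ) (A : Ω → α) (C : Ω → γ) (c : γ) :
    ∑ a, law p (fun ω => (A ω, C ω)) (a, c) = law p C c := by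
  simp only [law, Pr]
  rw [Finset.sum_comm]
  refine Finset.sum_congr rfl fun ω _ => ?_
  by_cases h : C ω = c <;> simp [h]

end Law

section ConditionalMutualInformation

variable {Ω α β γ : Type} [Fintype Ω] (p : Ω → ℝ) (A : Ω → α) (B : Ω → β) (C : Ω → γ)

def condProdLaw (t : α × β × γ) : ℝ :=
  law p (fun ω => (A ω, C ω)) (t.1, t.2.2) * law p (fun ω => (B ω, C ω)) t.2 / law p C t.2.2

theorem condProdLaw_nonneg {p : Ω → ℝ} (hp : ∀ ω, 0 ≤ p ω) (t : α × β × γ) :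
    0 ≤ condProdLaw p A B C t :=
  div_nonneg (mul_nonneg (law_nonneg hp _ _) (law_nonneg hp _ _)) (law_nonneg hp _ _)

theorem condProdLaw_pos {p : Ω → ℝ} (hp : ∀ ω, 0 ≤ p ω) {ω : Ω} (hω : 0 < p ω) :
    0 < condProdLaw p A B C (A ω, B ω, C ω) :=
  div_pos (mul_pos (law_pos_self hp _ hω) (law_pos_self hp _ hω)) (law_pos_self hp _ hω)

variable [Fintype α] [Fintype β] [Fintype γ]

theorem sum_condProdLaw : ∑ t, condProdLaw p A B C t = ∑ ω, p ω := calc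
  ∑ t, condProdLaw p A B C t
      = ∑ c, (∑ a, law p (fun ω => (A ω, C ω)) (a, c))
          * (∑ b, law p (fun ω => (B ω, C ω)) (b, c)) / law p C c := by
    simp only [condProdLaw, Fintype.sum_prod_type, Finset.sum_mul_sum, Finset.sum_div]
    exact (Finset.sum_congr rfl fun _ _ => Finset.sum_comm).trans Finset.sum_comm
  _ = ∑ c, law p C c := by simp only [sum_law_prod_left, mul_self_div_self]
  _ = ∑ ω, p ω := sum_law p C

theorem condProdLaw_eq_law (h : CondIndep p A B C) {t : α × β × γ} (ht : law p C t.2.2 ≠ 0) :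
    condProdLaw p A B C t = law p (fun ω => (A ω, B ω, C ω)) t := by
  obtain ⟨a, b, c⟩ := t
  simp only [condProdLaw, law, Prod.mk.injEq] at ht ⊢
  rw [← h, mul_div_cancel_right₀ _ ht]

theorem cmi_eq_neg_sum_log_div {p : Ω → ℝ} (hp : ∀ ω, 0 ≤ p ω) :
    cmi p A B C = -∑ ω, p ω * log (condProdLaw p A B C (A ω, B ω, C ω)
      / law p (fun ω => (A ω, B ω, C ω)) (A ω, B ω, C ω)) := by
  have hlog : ∀ ω, p ω * log (condProdLaw p A B C (A ω, B ω, C ω)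
      / law p (fun ω => (A ω, B ω, C ω)) (A ω, B ω, C ω))
      = p ω * log (law p (fun ω => (A ω, C ω)) (A ω, C ω))
        + p ω * log (law p (fun ω => (B ω, C ω)) (B ω, C ω))
        - p ω * log (law p C (C ω))
        - p ω * log (law p (fun ω => (A ω, B ω, C ω)) (A ω, B ω, C ω)) := by
    intro ω
    rcases (hp ω).eq_or_lt with h0 | hω
    · simp [← h0]
    have hAC := law_pos_self hp (fun ω => (A ω, C ω)) hω
    have hBC := law_pos_self hp (fun ω => (B ω, C ω)) hω
    have hC := law_pos_self hp C hω
    have hABC := law_pos_self hp (fun ω => (A ω, B ω, C ω)) hω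
    rw [log_div (condProdLaw_pos A B C hp hω).ne' hABC.ne', condProdLaw,
      log_div (mul_pos hAC hBC).ne' hC.ne', log_mul hAC.ne' hBC.ne']
    ring
  simp only [cmi, ent_eq_sum, hlog, Finset.sum_add_distrib, Finset.sum_sub_distrib]
  ring

theorem cmi_nonneg_s4 {p : Ω → ℝ} (hp : ∀ ω, 0 ≤ p ω) : 0 ≤ cmi p A B C := by
  set T := fun ω => (A ω, B ω, C ω)
  set r := fun t => condProdLaw p A B C t / law p T t
  have gibbs : ∀ ω, p ω * log (r (T ω)) ≤ p ω * r (T ω) - p ω := by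
    intro ω
    rcases (hp ω).eq_or_lt with h0 | hω
    · simp [← h0]
    have hr := log_le_sub_one_of_pos (div_pos (condProdLaw_pos A B C hp hω) (law_pos_self hp T hω))
    linarith [mul_le_mul_of_nonneg_left hr (hp ω)]
  have mass : ∑ ω, p ω * r (T ω) ≤ ∑ ω, p ω := calc
    ∑ ω, p ω * r (T ω) = ∑ t, law p T t * r t := sum_mul_comp p T r
    _ ≤ ∑ t, condProdLaw p A B C t := by
      refine Finset.sum_le_sum fun t _ => ?_
      rcases eq_or_ne (law p T t) 0 with h0 | h0
      · simpa [h0] using condProdLaw_nonneg A B C hp t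
      · rw [mul_div_cancel₀ _ h0]
    _ = ∑ ω, p ω := sum_condProdLaw p A B C
  have := Finset.sum_le_sum fun ω (_ : ω ∈ Finset.univ) => gibbs ω
  rw [Finset.sum_sub_distrib] at this
  rw [cmi_eq_neg_sum_log_div A B C hp]
  linarith

theorem cmi_eq_zero {p : Ω → ℝ} (hp : ∀ ω, 0 ≤ p ω) (h : CondIndep p A B C) :
    cmi p A B C = 0 := by
  rw [cmi_eq_neg_sum_log_div A B C hp, neg_eq_zero]
  refine Finset.sum_eq_zero fun ω _ => ?_
  rcases (hp ω).eq_or_lt with h0 | hω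
  · simp [← h0]
  rw [condProdLaw_eq_law p A B C h (law_pos_self hp C hω).ne',
    div_self (law_pos_self hp _ hω).ne', log_one, mul_zero]

end ConditionalMutualInformation

section GameValue

theorem XS_eq_iff {Ω L 𝒳 : Type} [Fintype Ω] (X : L → Ω → 𝒳) (S : Finset L) (ω ω' : Ω) :
    XS X S ω' = XS X S ω ↔ ∀ i ∈ S, X i ω' = X i ω := by
  simp [XS, funext_iff]

variable {Ω L 𝒳 β : Type} [Fintype Ω] [DecidableEq L] [Fintype 𝒳] [Fintype β]
  (p : Ω → ℝ) (X : L → Ω → 𝒳) (X0 : Ω → β)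

theorem ent_XS_pair (S T : Finset L) :
    ent p (fun ω => (XS X S ω, XS X T ω)) = ent p (XS X (S ∪ T)) :=
  ent_congr p fun ω ω' => by simp only [Prod.mk.injEq, XS_eq_iff, Finset.forall_mem_union]

theorem ent_XS_pair_prod {γ : Type} [Fintype γ] (W : Ω → γ) (S T : Finset L) :
    ent p (fun ω => (XS X S ω, XS X T ω, W ω)) = ent p (fun ω => (XS X (S ∪ T) ω, W ω)) :=
  ent_congr p fun ω ω' => by
    simp only [Prod.mk.injEq, XS_eq_iff, Finset.forall_mem_union, and_assoc]

theorem cmi_XS_XS_XS (S T R : Finset L) :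
    cmi p (XS X S) (XS X T) (XS X R)
      = ent p (XS X (S ∪ R)) + ent p (XS X (T ∪ R)) - ent p (XS X (S ∪ T ∪ R))
        - ent p (XS X R) := by
  rw [cmi, ent_XS_pair_prod, ent_XS_pair, ent_XS_pair, ent_XS_pair]

theorem cmi_XS_XS (S T : Finset L) :
    cmi p (XS X S) (XS X T) X0
      = ent p (fun ω => (XS X S ω, X0 ω)) + ent p (fun ω => (XS X T ω, X0 ω))
        - ent p (fun ω => (XS X (S ∪ T) ω, X0 ω)) - ent p X0 := by
  rw [cmi, ent_XS_pair_prod]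

theorem condEnt_XS_supermodular {p : Ω → ℝ} (hp : ∀ ω, 0 ≤ p ω) (A B : Finset L)
    (hM : CondIndep p (XS X A) (XS X (B \ A)) X0) :
    condEnt p X0 (XS X A) + condEnt p X0 (XS X B)
      ≤ condEnt p X0 (XS X (A ∪ B)) + condEnt p X0 (XS X (A ∩ B)) := by
  have hAB := cmi_nonneg_s4 (XS X A) (XS X B) (XS X (A ∩ B)) hp
  have hCE := cmi_nonneg_s4 (XS X (A ∩ B)) (XS X (B \ A)) X0 hp
  have hAE := cmi_eq_zero (XS X A) (XS X (B \ A)) X0 hp hM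
  have hA : A ∪ A ∩ B = A := Finset.union_eq_left.2 Finset.inter_subset_left
  have hB : B ∪ A ∩ B = B := Finset.union_eq_left.2 Finset.inter_subset_right
  have hC : A ∩ B ∪ B \ A = B := by rw [Finset.inter_comm]; exact sup_inf_sdiff B A
  rw [cmi_XS_XS_XS, hA, hB, Finset.union_eq_left.2 Finset.inter_subset_union] at hAB
  rw [cmi_XS_XS, hC] at hCE
  rw [cmi_XS_XS, Finset.union_sdiff_self_eq_union] at hAE
  simp only [condEnt, ent_prod_comm p X0]
  linarith

theorem vGame_eq_add_condEnt [Fintype L] (S : Finset L) :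
    vGame p X X0 S = ent p (XS X Finset.univ) - ent p (fun ω => (X0 ω, XS X Finset.univ ω))
      + condEnt p X0 (XS X Sᶜ) := by
  have hX0 : ent p (fun ω => (XS X S ω, X0 ω, XS X Sᶜ ω))
      = ent p (fun ω => (X0 ω, XS X Finset.univ ω)) := by
    rw [← Finset.union_compl S]
    refine ent_congr p fun ω ω' => ?_
    simp only [Prod.mk.injEq, XS_eq_iff, Finset.forall_mem_union]
    tauto
  rw [vGame, cmi, condEnt, ent_XS_pair, Finset.union_compl, hX0]
  ring

end GameValue

/-- the value function `v(S) = I(X_S; X_0 | X_{L\S})` is supermodular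
(the game is convex). -/
theorem statement4 {Ω L 𝒳 β : Type} [Fintype Ω] [Fintype L] [DecidableEq L] [Fintype 𝒳] [Fintype β]
    (p : Ω → ℝ) (hp : IsPMF p) (X : L → Ω → 𝒳) (X0 : Ω → β)
    (hM : ∀ S T : Finset L, Disjoint S T → CondIndep p (XS X S) (XS X T) X0) :
    ∀ U V : Finset L,
      vGame p X X0 U + vGame p X X0 V
        ≤ vGame p X X0 (U ∪ V) + vGame p X X0 (U ∩ V) := by
  intro U V
  have := condEnt_XS_supermodular X X0 hp.1 Uᶜ Vᶜ (hM _ _ Finset.disjoint_sdiff)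
  simp only [vGame_eq_add_condEnt]
  rw [Finset.compl_union, Finset.compl_inter]
  linarith
end
end
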